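/- With the matrices, partition, DG space V_DG^r and energy norm |||·||| as in the context, the functional |||·||| is a norm on V_DG^r; in particular, if z ∈ V_DG^r satisfies |||z||| = 0, then z = 0 identically on (0,T]. -/

import Mathlib

open Matrix MeasureTheory Set

/-- Squared Euclidean norm of a vector. -/
noncomputable def esq {ι : Type*} [Fintype ι] (v : ι → ℝ) : ℝ := ∑ i, v i ^ 2

/-- `v : ℝ → ℝ^{2d}` is (componentwise) a polynomial of degree at most `r`. -/
def IsPolyDegV {d : ℕ} (r : ℕ) (v : ℝ → (Fin d ⊕ Fin d) → ℝ) : Prop :=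
  ∀ i, ∃ p : Polynomial ℝ, p.natDegree ≤ r ∧ ∀ s, v s i = p.eval s

/-- The squared DG energy norm
`|||z|||² = Σₙ ∫_{Iₙ} |L̃ z|² dt + ½|K̃^{1/2} z(0⁺)|² + ½ Σ_{n=1}^{N−1} |K̃^{1/2}[z]ₙ|²
           + ½|K̃^{1/2} z(T⁻)|²`,
where `z` is represented by the family `Z` of its extensions from the slabs
`Iₙ = (t_{n−1}, tₙ]` (so `z(tₙ⁺) = Z (n+1) (t n)`, `z(tₙ⁻) = Z n (t n)`). -/
noncomputable def dgNormSq {d : ℕ}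
    (Ltil Ksqrt : Matrix (Fin d ⊕ Fin d) (Fin d ⊕ Fin d) ℝ)
    (N : ℕ) (t : ℕ → ℝ) (Z : ℕ → ℝ → (Fin d ⊕ Fin d) → ℝ) : ℝ :=
  (∑ n ∈ Finset.Icc 1 N, ∫ s in (t (n-1))..(t n), esq (Ltil.mulVec (Z n s)))
  + (1/2) * esq (Ksqrt.mulVec (Z 1 (t 0)))
  + (1/2) * ∑ n ∈ Finset.Icc 1 (N-1), esq (Ksqrt.mulVec (Z (n+1) (t n) - Z n (t n)))
  + (1/2) * esq (Ksqrt.mulVec (Z N (t N)))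

/-- Membership in the DG space `V_DG^r`: `z` (represented slab-wise by `Z`) is a piecewise
polynomial of degree `≤ rₙ` on each slab, admitting a continuous reconstruction
`ẑ = (û,ŵ)` (represented slab-wise by `Zh`, matching at the nodes) which is slab-wise
polynomial of degree `≤ rₙ`, satisfies `û′ = ŵ`, the reconstruction identity
`∫_{Iₙ} ẑ′·v dt = ∫_{Iₙ} ż·v dt + [z]_{n−1}·v(t_{n−1}⁺)` for all polynomial test
functions `v` of degree `≤ rₙ` (with `z(0⁻) := ẑ(0)` in the jump `[z]₀`), and
`ẑ(t_{n−1}) = z(t_{n−1}⁻)` for `n = 2,…,N`. -/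
def MemDG {d : ℕ} (N : ℕ) (t : ℕ → ℝ) (r : ℕ → ℕ)
    (Z : ℕ → ℝ → (Fin d ⊕ Fin d) → ℝ) : Prop :=
  (∀ n ∈ Finset.Icc 1 N, IsPolyDegV (r n) (Z n)) ∧
  ∃ Zh : ℕ → ℝ → (Fin d ⊕ Fin d) → ℝ,
    (∀ n ∈ Finset.Icc 1 N, IsPolyDegV (r n) (Zh n)) ∧
    (∀ n ∈ Finset.Icc 1 (N-1), Zh (n+1) (t n) = Zh n (t n)) ∧
    (∀ n ∈ Finset.Icc 1 N, ∀ s : ℝ,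
       deriv (fun τ => fun i => Zh n τ (Sum.inl i)) s = fun i => Zh n s (Sum.inr i)) ∧
    (∀ n ∈ Finset.Icc 1 N, ∀ v : ℝ → (Fin d ⊕ Fin d) → ℝ, IsPolyDegV (r n) v →
       (∫ s in (t (n-1))..(t n), deriv (Zh n) s ⬝ᵥ v s)
         = (∫ s in (t (n-1))..(t n), deriv (Z n) s ⬝ᵥ v s)
           + (Z n (t (n-1)) - (if n = 1 then Zh 1 (t 0) else Z (n-1) (t (n-1))))
              ⬝ᵥ v (t (n-1))) ∧
    (∀ n ∈ Finset.Icc 2 N, Zh n (t (n-1)) = Z (n-1) (t (n-1)))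

/-- The square root of a positive semidefinite matrix, as defined in the older Mathlib
(`Matrix.PosSemidef.sqrt`, since removed). -/
noncomputable def Matrix.PosSemidef.sqrt {n 𝕜 : Type*} [Fintype n] [DecidableEq n] [RCLike 𝕜] [PartialOrder 𝕜]
    {A : Matrix n n 𝕜} (hA : A.PosSemidef) : Matrix n n 𝕜 :=
  (hA.1.eigenvectorUnitary : Matrix n n 𝕜) * diagonal (fun i => (((hA.1.eigenvalues i).sqrt : ℝ) : 𝕜)) *
    (star hA.1.eigenvectorUnitary : Matrix n n 𝕜)

/-!
The triangle inequality is Cauchy–Schwarz for the bilinear form `dgInner` polarizing `|||·|||²`.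

For definiteness, the decisive point is that the reconstruction `ẑ` has the same degree `rₙ`
as `z`. On every slab the jump in the reconstruction identity equals `-(ẑ - z)(t_{n-1})`, so
testing with `ẑ - z` gives `|(ẑ - z)(t_{n-1})|² + |(ẑ - z)(tₙ)|² = 0`, and then `(ẑ - z)'` is
orthogonal to itself: `ẑ = z`, hence `u' = w`. If `|||z||| = 0`, the `L̃`-term gives `w = 0`, so
`u` is constant on each slab, and `z(0⁺) = 0` together with the vanishing jumps makes `z = 0`
slab by slab.
-/

open Polynomial

section Vectors

variable {ι : Type*} [Fintype ι]

theorem esq_eq_dotProduct (v : ι → ℝ) : esq v = v ⬝ᵥ v := by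
  simp [esq, dotProduct, sq]

theorem esq_nonneg (v : ι → ℝ) : 0 ≤ esq v :=
  Finset.sum_nonneg fun i _ => sq_nonneg (v i)

theorem esq_eq_zero_iff {v : ι → ℝ} : esq v = 0 ↔ v = 0 := by
  rw [esq_eq_dotProduct, dotProduct_self_eq_zero]

@[fun_prop]
theorem continuous_esq : Continuous (esq : (ι → ℝ) → ℝ) := by
  rw [show (esq : (ι → ℝ) → ℝ) = fun v => v ⬝ᵥ v from _root_.funext esq_eq_dotProduct]
  fun_prop

theorem esq_add_smul (u v : ι → ℝ) (x : ℝ) :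
    esq (u + x • v) = esq u + 2 * x * (u ⬝ᵥ v) + x ^ 2 * esq v := by
  simp only [esq_eq_dotProduct, add_dotProduct, dotProduct_add, smul_dotProduct, dotProduct_smul,
    dotProduct_comm v u, smul_eq_mul]
  ring

theorem esq_smul (c : ℝ) (v : ι → ℝ) : esq (c • v) = c ^ 2 * esq v := by
  simp only [esq_eq_dotProduct, smul_dotProduct, dotProduct_smul, smul_eq_mul]
  ring

end Vectors

theorem Matrix.PosSemidef.sqrt_mul_self {n : Type*} [Fintype n] [DecidableEq n]
    {A : Matrix n n ℝ} (hA : A.PosSemidef) : hA.sqrt * hA.sqrt = A := by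
  set U : Matrix n n ℝ := (hA.1.eigenvectorUnitary : Matrix n n ℝ)
  set D : Matrix n n ℝ := diagonal fun i => √(hA.1.eigenvalues i)
  have hU : star U * U = 1 := Unitary.coe_star_mul_self _
  calc hA.sqrt * hA.sqrt = U * (D * (star U * U) * D) * star U := by
        simp only [Matrix.PosSemidef.sqrt, mul_assoc]; rfl
    _ = A := by
      conv_rhs => rw [hA.1.spectral_theorem, Unitary.conjStarAlgAut_apply]
      rw [hU, mul_one, diagonal_mul_diagonal]
      congr 3
      funext i
      simp [Real.mul_self_sqrt (hA.eigenvalues_nonneg i)]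

theorem Matrix.PosDef.eq_zero_of_sqrt_mulVec_eq_zero {n : Type*} [Fintype n] [DecidableEq n]
    {A : Matrix n n ℝ} (hA : A.PosDef) {v : n → ℝ} (h : hA.posSemidef.sqrt *ᵥ v = 0) : v = 0 := by
  by_contra hv
  have hpos := hA.dotProduct_mulVec_pos hv
  rw [← hA.posSemidef.sqrt_mul_self, ← mulVec_mulVec, h, mulVec_zero, dotProduct_zero] at hpos
  exact hpos.false

theorem eq_zero_of_integral_eq_zero_of_nonneg {f : ℝ → ℝ} {a b : ℝ} (hab : a < b)
    (hf : Continuous f) (hf0 : ∀ x, 0 ≤ f x) (h : ∫ x in a..b, f x = 0) :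
    ∀ x ∈ Icc a b, f x = 0 := fun x hx => by
  by_contra hne
  exact (intervalIntegral.integral_pos hab hf.continuousOn (fun y _ => hf0 y)
    ⟨x, hx, (hf0 x).lt_of_ne' hne⟩).ne' h

namespace Polynomial

theorem eq_zero_of_integral_sq_eq_zero {p : ℝ[X]} {a b : ℝ} (hab : a < b)
    (h : ∫ s in a..b, p.eval s ^ 2 = 0) : p = 0 :=
  p.eq_zero_of_infinite_isRoot <| (Set.Icc_infinite hab).mono fun x hx =>
    pow_eq_zero_iff two_ne_zero |>.1 <|
      eq_zero_of_integral_eq_zero_of_nonneg hab (by fun_prop) (fun _ => sq_nonneg _) h x hx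

theorem integral_derivative_mul_self (p : ℝ[X]) (a b : ℝ) :
    ∫ s in a..b, p.derivative.eval s * p.eval s = (p.eval b ^ 2 - p.eval a ^ 2) / 2 := by
  rw [intervalIntegral.integral_eq_sub_of_hasDerivAt (f := fun s => (p * p).eval s / 2)
    (fun s _ => ?_) ((by fun_prop : Continuous _).intervalIntegrable _ _)]
  · simp only [eval_mul]
    ring
  · refine (((p * p).hasDerivAt s).div_const 2).congr_deriv ?_
    simp only [derivative_mul, eval_add, eval_mul]
    ring

/-- Testing with `q = e` gives `e(a)² + e(b)² = 0`, after which `e'` is orthogonal to itself. -/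
theorem eq_zero_of_integral_derivative_mul_eq {e : ℝ[X]} {r : ℕ} {a b : ℝ} (hab : a < b)
    (he : e.natDegree ≤ r)
    (h : ∀ q : ℝ[X], q.natDegree ≤ r →
      ∫ s in a..b, e.derivative.eval s * q.eval s = -(e.eval a * q.eval a)) :
    e = 0 := by
  have hea : e.eval a = 0 := by
    have hee := h e he
    rw [integral_derivative_mul_self] at hee
    nlinarith [sq_nonneg (e.eval b)]
  have hde : e.derivative = 0 := by
    apply eq_zero_of_integral_sq_eq_zero hab
    simpa [hea, sq] using h e.derivative ((natDegree_derivative_le e).trans (by omega))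
  rw [eq_C_of_derivative_eq_zero hde] at hea ⊢
  simpa using hea

end Polynomial

theorem deriv_pi_polynomial_eval {ι : Type*} [Fintype ι] (p : ι → ℝ[X]) (s : ℝ) :
    deriv (fun τ i => (p i).eval τ) s = fun i => (p i).derivative.eval s := by
  rw [deriv_pi fun i => (p i).differentiableAt]
  simp only [Polynomial.deriv]

section IsPolyDegV

variable {d r : ℕ}

theorem IsPolyDegV.differentiable {v : ℝ → Fin d ⊕ Fin d → ℝ} (h : IsPolyDegV r v) :
    Differentiable ℝ v :=
  differentiable_pi.2 fun i => by
    obtain ⟨p, -, hp⟩ := h i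
    rw [show (fun s => v s i) = fun s => p.eval s from funext hp]
    exact p.differentiable

theorem isPolyDegV_single (i : Fin d ⊕ Fin d) {q : ℝ[X]} (hq : q.natDegree ≤ r) :
    IsPolyDegV r fun s => Pi.single i (q.eval s) := by
  intro j
  by_cases hji : j = i
  · subst hji
    exact ⟨q, hq, fun s => by simp⟩
  · exact ⟨0, by simp, fun s => by simp [hji]⟩

theorem IsPolyDegV.eq_of_reconstruction_identity {F G : ℝ → Fin d ⊕ Fin d → ℝ}
    (hF : IsPolyDegV r F) (hG : IsPolyDegV r G) {a b : ℝ} (hab : a < b)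
    (hid : ∀ v, IsPolyDegV r v →
      ∫ s in a..b, deriv G s ⬝ᵥ v s = (∫ s in a..b, deriv F s ⬝ᵥ v s) + (F a - G a) ⬝ᵥ v a) :
    G = F := by
  choose p hpdeg hp using hF
  choose q hqdeg hq using hG
  obtain rfl : F = fun s i => (p i).eval s := funext₂ fun s i => hp i s
  obtain rfl : G = fun s i => (q i).eval s := funext₂ fun s i => hq i s
  funext s i
  suffices q i - p i = 0 by simpa [sub_eq_zero] using congrArg (eval s) this
  refine eq_zero_of_integral_derivative_mul_eq hab
    ((natDegree_sub_le_of_le (hqdeg i) (hpdeg i)).trans (max_self r).le) fun w hw => ?_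
  have hiw := hid _ (isPolyDegV_single i hw)
  simp only [deriv_pi_polynomial_eval, dotProduct_single, Pi.sub_apply] at hiw
  simp only [derivative_sub, eval_sub, sub_mul]
  rw [intervalIntegral.integral_sub ((by fun_prop : Continuous _).intervalIntegrable _ _)
    ((by fun_prop : Continuous _).intervalIntegrable _ _), hiw]
  ring

end IsPolyDegV

theorem t_sub_one_lt {N : ℕ} {t : ℕ → ℝ} (hmono : ∀ n < N, t n < t (n + 1)) {n : ℕ}
    (hn : n ∈ Finset.Icc 1 N) : t (n - 1) < t n := by
  obtain ⟨hn1, hnN⟩ := Finset.mem_Icc.1 hn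
  simpa [Nat.sub_add_cancel hn1] using hmono (n - 1) (by omega)

theorem MemDG.deriv_inl_eq_inr {d N : ℕ} {t : ℕ → ℝ} {r : ℕ → ℕ} {Z : ℕ → ℝ → Fin d ⊕ Fin d → ℝ}
    (hZ : MemDG N t r Z) (hmono : ∀ n < N, t n < t (n + 1)) :
    ∀ n ∈ Finset.Icc 1 N, ∀ s,
      deriv (fun τ i => Z n τ (Sum.inl i)) s = fun i => Z n s (Sum.inr i) := by
  obtain ⟨hZpoly, Zh, hZhpoly, -, hode, hident, hmatch⟩ := hZ
  intro n hn
  obtain ⟨hn1, hnN⟩ := Finset.mem_Icc.1 hn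
  have hprev : (if n = 1 then Zh 1 (t 0) else Z (n - 1) (t (n - 1))) = Zh n (t (n - 1)) := by
    split_ifs with h1
    · subst h1
      rfl
    · exact (hmatch n (Finset.mem_Icc.2 ⟨by omega, hnN⟩)).symm
  have hid := hident n hn
  simp only [hprev] at hid
  rw [← (hZpoly n hn).eq_of_reconstruction_identity (hZhpoly n hn) (t_sub_one_lt hmono hn) hid]
  exact hode n hn

theorem MemDG.continuous {d N : ℕ} {t : ℕ → ℝ} {r : ℕ → ℕ} {Z : ℕ → ℝ → Fin d ⊕ Fin d → ℝ}
    (hZ : MemDG N t r Z) : ∀ n ∈ Finset.Icc 1 N, Continuous (Z n) :=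
  fun n hn => (hZ.1 n hn).differentiable.continuous

theorem esq_fromBlocks_zero_mulVec {d : ℕ} (S : Matrix (Fin d) (Fin d) ℝ) (z : Fin d ⊕ Fin d → ℝ) :
    esq (fromBlocks (0 : Matrix (Fin d) (Fin d) ℝ) 0 0 S *ᵥ z) = esq (S *ᵥ fun i => z (Sum.inr i)) := by
  simp [esq, fromBlocks_mulVec, Fintype.sum_sum_type]
  rfl

theorem eq_zero_on_Icc_of_integral_esq_eq_zero {d : ℕ} {S : Matrix (Fin d) (Fin d) ℝ}
    (hS : ∀ v, S *ᵥ v = 0 → v = 0) {F : ℝ → Fin d ⊕ Fin d → ℝ} (hF : Differentiable ℝ F)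
    (hode : ∀ s, deriv (fun τ i => F τ (Sum.inl i)) s = fun i => F s (Sum.inr i))
    {a b : ℝ} (hab : a < b) (hE : ∫ s in a..b, esq (fromBlocks (0 : Matrix (Fin d) (Fin d) ℝ) 0 0 S *ᵥ F s) = 0)
    (ha : F a = 0) : ∀ s ∈ Icc a b, F s = 0 := by
  have := hF.continuous
  have hw : ∀ s ∈ Icc a b, (fun i => F s (Sum.inr i)) = 0 := fun s hs =>
    hS _ <| esq_eq_zero_iff.1 <| by
      simpa only [esq_fromBlocks_zero_mulVec] using
        eq_zero_of_integral_eq_zero_of_nonneg hab (by fun_prop) (fun _ => esq_nonneg _) hE s hs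
  have hU : Differentiable ℝ fun τ i => F τ (Sum.inl i) :=
    differentiable_pi.2 fun i => differentiable_pi.1 hF (Sum.inl i)
  have hconst := constant_of_has_deriv_right_zero hU.continuous.continuousOn fun s hs => by
    have hs' := (hU s).hasDerivAt
    rw [hode s, hw s (Ico_subset_Icc_self hs)] at hs'
    exact hs'.hasDerivWithinAt
  intro s hs
  funext k
  cases k with
  | inl i => exact (congrFun (hconst s hs) i).trans (congrFun ha (Sum.inl i))
  | inr j => exact congrFun (hw s hs) j

theorem Real.sqrt_add_le_of_forall_quadratic_nonneg {a b c : ℝ} (hc : 0 ≤ c)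
    (h : ∀ x, 0 ≤ a + 2 * x * b + x ^ 2 * c) : √(a + 2 * b + c) ≤ √a + √c := by
  have ha : 0 ≤ a := by simpa using h 0
  have hdisc : b ^ 2 ≤ a * c := by
    have := discrim_le_zero fun x => (h x).trans_eq (by ring : _ = c * (x * x) + 2 * b * x + a)
    rw [discrim] at this
    linarith
  have hb : b ≤ √a * √c := by
    rw [← Real.sqrt_mul ha]
    exact Real.le_sqrt_of_sq_le hdisc
  refine Real.sqrt_le_iff.2 ⟨by positivity, ?_⟩
  nlinarith [Real.sq_sqrt ha, Real.sq_sqrt hc]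

noncomputable def dgInner {d : ℕ} (Lt Ks : Matrix (Fin d ⊕ Fin d) (Fin d ⊕ Fin d) ℝ)
    (N : ℕ) (t : ℕ → ℝ) (Z Y : ℕ → ℝ → Fin d ⊕ Fin d → ℝ) : ℝ :=
  (∑ n ∈ Finset.Icc 1 N, ∫ s in (t (n - 1))..(t n), (Lt *ᵥ Z n s) ⬝ᵥ (Lt *ᵥ Y n s))
  + (1 / 2) * ((Ks *ᵥ Z 1 (t 0)) ⬝ᵥ (Ks *ᵥ Y 1 (t 0)))
  + (1 / 2) * ∑ n ∈ Finset.Icc 1 (N - 1),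
      (Ks *ᵥ (Z (n + 1) (t n) - Z n (t n))) ⬝ᵥ (Ks *ᵥ (Y (n + 1) (t n) - Y n (t n)))
  + (1 / 2) * ((Ks *ᵥ Z N (t N)) ⬝ᵥ (Ks *ᵥ Y N (t N)))

section EnergyNorm

variable {d N : ℕ} (Lt Ks : Matrix (Fin d ⊕ Fin d) (Fin d ⊕ Fin d) ℝ) (t : ℕ → ℝ)

theorem dgNormSq_smul (Z : ℕ → ℝ → Fin d ⊕ Fin d → ℝ) (c : ℝ) :
    dgNormSq Lt Ks N t (fun n τ => c • Z n τ) = c ^ 2 * dgNormSq Lt Ks N t Z := by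
  simp only [dgNormSq, ← smul_sub, mulVec_smul, esq_smul, intervalIntegral.integral_const_mul,
    ← Finset.mul_sum]
  ring

theorem dgNormSq_add_smul {Z Y : ℕ → ℝ → Fin d ⊕ Fin d → ℝ}
    (hZ : ∀ n ∈ Finset.Icc 1 N, Continuous (Z n)) (hY : ∀ n ∈ Finset.Icc 1 N, Continuous (Y n))
    (x : ℝ) :
    dgNormSq Lt Ks N t (fun n τ => Z n τ + x • Y n τ)
      = dgNormSq Lt Ks N t Z + 2 * x * dgInner Lt Ks N t Z Y + x ^ 2 * dgNormSq Lt Ks N t Y := by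
  have hslab : ∀ n ∈ Finset.Icc 1 N,
      ∫ s in (t (n - 1))..(t n), esq (Lt *ᵥ (Z n s + x • Y n s))
        = (∫ s in (t (n - 1))..(t n), esq (Lt *ᵥ Z n s))
          + 2 * x * (∫ s in (t (n - 1))..(t n), (Lt *ᵥ Z n s) ⬝ᵥ (Lt *ᵥ Y n s))
          + x ^ 2 * ∫ s in (t (n - 1))..(t n), esq (Lt *ᵥ Y n s) := by
    intro n hn
    have := hZ n hn
    have := hY n hn
    simp only [mulVec_add, mulVec_smul, esq_add_smul]
    rw [intervalIntegral.integral_add ((by fun_prop : Continuous _).intervalIntegrable _ _)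
        ((by fun_prop : Continuous _).intervalIntegrable _ _),
      intervalIntegral.integral_add ((by fun_prop : Continuous _).intervalIntegrable _ _)
        ((by fun_prop : Continuous _).intervalIntegrable _ _),
      intervalIntegral.integral_const_mul, intervalIntegral.integral_const_mul]
  have hjump : ∀ n, Z (n + 1) (t n) + x • Y (n + 1) (t n) - (Z n (t n) + x • Y n (t n))
      = Z (n + 1) (t n) - Z n (t n) + x • (Y (n + 1) (t n) - Y n (t n)) := fun n => by
    module
  rw [dgNormSq, Finset.sum_congr rfl hslab]
  simp only [dgNormSq, dgInner, hjump, mulVec_add, mulVec_smul, esq_add_smul,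
    Finset.sum_add_distrib, ← Finset.mul_sum]
  ring

theorem integral_esq_nonneg (hmono : ∀ n < N, t n < t (n + 1)) {n : ℕ}
    (hn : n ∈ Finset.Icc 1 N) (f : ℝ → Fin d ⊕ Fin d → ℝ) :
    0 ≤ ∫ s in (t (n - 1))..(t n), esq (f s) :=
  intervalIntegral.integral_nonneg (t_sub_one_lt hmono hn).le fun _ _ => esq_nonneg _

variable {t}

theorem dgNormSq_nonneg (hmono : ∀ n < N, t n < t (n + 1)) (Z : ℕ → ℝ → Fin d ⊕ Fin d → ℝ) :
    0 ≤ dgNormSq Lt Ks N t Z := by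
  have := Finset.sum_nonneg fun n hn => integral_esq_nonneg t hmono hn fun s => Lt *ᵥ Z n s
  have := Finset.sum_nonneg fun n (_ : n ∈ Finset.Icc 1 (N - 1)) =>
    esq_nonneg (Ks *ᵥ (Z (n + 1) (t n) - Z n (t n)))
  have := esq_nonneg (Ks *ᵥ Z 1 (t 0))
  have := esq_nonneg (Ks *ᵥ Z N (t N))
  unfold dgNormSq
  linarith

theorem dgNormSq_parts_eq_zero {Z : ℕ → ℝ → Fin d ⊕ Fin d → ℝ} (hmono : ∀ n < N, t n < t (n + 1))
    (h : dgNormSq Lt Ks N t Z = 0) :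
    (∀ n ∈ Finset.Icc 1 N, ∫ s in (t (n - 1))..(t n), esq (Lt *ᵥ Z n s) = 0)
      ∧ esq (Ks *ᵥ Z 1 (t 0)) = 0
      ∧ ∀ n ∈ Finset.Icc 1 (N - 1), esq (Ks *ᵥ (Z (n + 1) (t n) - Z n (t n))) = 0 := by
  have := Finset.sum_nonneg fun n hn => integral_esq_nonneg t hmono hn fun s => Lt *ᵥ Z n s
  have := Finset.sum_nonneg fun n (_ : n ∈ Finset.Icc 1 (N - 1)) =>
    esq_nonneg (Ks *ᵥ (Z (n + 1) (t n) - Z n (t n)))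
  have := esq_nonneg (Ks *ᵥ Z 1 (t 0))
  have := esq_nonneg (Ks *ᵥ Z N (t N))
  unfold dgNormSq at h
  refine ⟨(Finset.sum_eq_zero_iff_of_nonneg fun n hn => integral_esq_nonneg t hmono hn _).1
      (by linarith), by linarith,
    (Finset.sum_eq_zero_iff_of_nonneg fun n _ => esq_nonneg _).1 (by linarith)⟩

end EnergyNorm

theorem sqrt_dgNormSq_add_le {d N : ℕ} (Lt Ks : Matrix (Fin d ⊕ Fin d) (Fin d ⊕ Fin d) ℝ)
    {t : ℕ → ℝ} (hmono : ∀ n < N, t n < t (n + 1)) {Z Y : ℕ → ℝ → Fin d ⊕ Fin d → ℝ}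
    (hZ : ∀ n ∈ Finset.Icc 1 N, Continuous (Z n)) (hY : ∀ n ∈ Finset.Icc 1 N, Continuous (Y n)) :
    √(dgNormSq Lt Ks N t fun n τ => Z n τ + Y n τ)
      ≤ √(dgNormSq Lt Ks N t Z) + √(dgNormSq Lt Ks N t Y) := by
  have hZY := dgNormSq_add_smul Lt Ks t hZ hY 1
  simp only [one_smul, mul_one, one_pow, one_mul] at hZY
  rw [hZY]
  exact Real.sqrt_add_le_of_forall_quadratic_nonneg (dgNormSq_nonneg Lt Ks hmono Y) fun x =>
    dgNormSq_add_smul Lt Ks t hZ hY x ▸ dgNormSq_nonneg Lt Ks hmono _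

theorem MemDG.eq_zero_of_dgNormSq_eq_zero {d N : ℕ} {L : Matrix (Fin d) (Fin d) ℝ} (hL : L.PosDef)
    {A : Matrix (Fin d ⊕ Fin d) (Fin d ⊕ Fin d) ℝ} (hA : A.PosDef) {t : ℕ → ℝ}
    (hmono : ∀ n < N, t n < t (n + 1)) {r : ℕ → ℕ} {Z : ℕ → ℝ → Fin d ⊕ Fin d → ℝ}
    (hZ : MemDG N t r Z)
    (h : dgNormSq (fromBlocks 0 0 0 hL.posSemidef.sqrt) hA.posSemidef.sqrt N t Z = 0) :
    ∀ n ∈ Finset.Icc 1 N, ∀ s ∈ Icc (t (n - 1)) (t n), Z n s = 0 := by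
  obtain ⟨hE, h0, hjump⟩ := dgNormSq_parts_eq_zero _ _ hmono h
  have hA0 : ∀ v, esq (hA.posSemidef.sqrt *ᵥ v) = 0 → v = 0 := fun v hv =>
    hA.eq_zero_of_sqrt_mulVec_eq_zero (esq_eq_zero_iff.1 hv)
  have hslab : ∀ n ∈ Finset.Icc 1 N, Z n (t (n - 1)) = 0 →
      ∀ s ∈ Icc (t (n - 1)) (t n), Z n s = 0 := fun n hn =>
    eq_zero_on_Icc_of_integral_esq_eq_zero (fun _ => hL.eq_zero_of_sqrt_mulVec_eq_zero)
      (hZ.1 n hn).differentiable (hZ.deriv_inl_eq_inr hmono n hn) (t_sub_one_lt hmono hn) (hE n hn)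
  intro n hn
  induction n, (Finset.mem_Icc.1 hn).1 using Nat.le_induction with
  | base => exact hslab 1 hn (hA0 _ h0)
  | succ n hn1 ih =>
    have hnN := (Finset.mem_Icc.1 hn).2
    refine hslab (n + 1) hn ?_
    rw [Nat.add_sub_cancel, sub_eq_zero.1 (hA0 _ (hjump n (Finset.mem_Icc.2 ⟨hn1, by omega⟩)))]
    have hn' : n ∈ Finset.Icc 1 N := Finset.mem_Icc.2 ⟨hn1, by omega⟩
    exact ih hn' (t n) ⟨(t_sub_one_lt hmono hn').le, le_rfl⟩

theorem stmt_4_general {d N : ℕ}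
    (P L K : Matrix (Fin d) (Fin d) ℝ) (hL : L.PosDef)
    (hKP : (Matrix.fromBlocks K 0 0 P).PosDef)
    (t : ℕ → ℝ)
    (hmono : ∀ n < N, t n < t (n+1)) (r : ℕ → ℕ) :
    (∀ Z : ℕ → ℝ → (Fin d ⊕ Fin d) → ℝ, MemDG N t r Z → ∀ c : ℝ,
       Real.sqrt (dgNormSq (Matrix.fromBlocks 0 0 0 hL.posSemidef.sqrt)
           hKP.posSemidef.sqrt N t (fun n τ => c • Z n τ))
         = |c| * Real.sqrt (dgNormSq (Matrix.fromBlocks 0 0 0 hL.posSemidef.sqrt)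
             hKP.posSemidef.sqrt N t Z)) ∧
    (∀ Z Y : ℕ → ℝ → (Fin d ⊕ Fin d) → ℝ, MemDG N t r Z → MemDG N t r Y →
       Real.sqrt (dgNormSq (Matrix.fromBlocks 0 0 0 hL.posSemidef.sqrt)
           hKP.posSemidef.sqrt N t (fun n τ => Z n τ + Y n τ))
         ≤ Real.sqrt (dgNormSq (Matrix.fromBlocks 0 0 0 hL.posSemidef.sqrt)
             hKP.posSemidef.sqrt N t Z)
           + Real.sqrt (dgNormSq (Matrix.fromBlocks 0 0 0 hL.posSemidef.sqrt)
               hKP.posSemidef.sqrt N t Y)) ∧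
    (∀ Z : ℕ → ℝ → (Fin d ⊕ Fin d) → ℝ, MemDG N t r Z →
       Real.sqrt (dgNormSq (Matrix.fromBlocks 0 0 0 hL.posSemidef.sqrt)
           hKP.posSemidef.sqrt N t Z) = 0 →
       ∀ n ∈ Finset.Icc 1 N, ∀ s ∈ Set.Ioc (t (n-1)) (t n), Z n s = 0) := by
  refine ⟨fun Z _ c => ?_, fun Z Y hZ hY => ?_, fun Z hZ h0 n hn s hs => ?_⟩
  · rw [dgNormSq_smul, Real.sqrt_mul (sq_nonneg c), Real.sqrt_sq_eq_abs]
  · exact sqrt_dgNormSq_add_le _ _ hmono hZ.continuous hY.continuous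
  · have hQ := (Real.sqrt_eq_zero'.1 h0).antisymm (dgNormSq_nonneg _ _ hmono Z)
    exact hZ.eq_zero_of_dgNormSq_eq_zero hL hKP hmono hQ n hn s (Ioc_subset_Icc_self hs)

/-- With `P, L, K` symmetric positive definite,
`K̃ = [[K,0],[0,P]]`, `L̃ = [[0,0],[0,L^{1/2}]]` and a partition `0 = t₀ < ⋯ < t_N = T`,
the functional `|||·|||` is a norm on `V_DG^r`: it is absolutely homogeneous,
satisfies the triangle inequality, and is definite — in particular, if `z ∈ V_DG^r`
satisfies `|||z||| = 0` then `z = 0` identically on `(0,T]`. -/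
theorem stmt_4 {d N : ℕ} (hd : 1 ≤ d) (hN : 1 ≤ N)
    (P L K : Matrix (Fin d) (Fin d) ℝ) (hP : P.PosDef) (hL : L.PosDef) (hK : K.PosDef)
    (hKP : (Matrix.fromBlocks K 0 0 P).PosDef)
    (T : ℝ) (hT : 0 < T) (t : ℕ → ℝ) (ht0 : t 0 = 0) (htN : t N = T)
    (hmono : ∀ n < N, t n < t (n+1)) (r : ℕ → ℕ) :
    (∀ Z : ℕ → ℝ → (Fin d ⊕ Fin d) → ℝ, MemDG N t r Z → ∀ c : ℝ,
       Real.sqrt (dgNormSq (Matrix.fromBlocks 0 0 0 hL.posSemidef.sqrt)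
           hKP.posSemidef.sqrt N t (fun n τ => c • Z n τ))
         = |c| * Real.sqrt (dgNormSq (Matrix.fromBlocks 0 0 0 hL.posSemidef.sqrt)
             hKP.posSemidef.sqrt N t Z)) ∧
    (∀ Z Y : ℕ → ℝ → (Fin d ⊕ Fin d) → ℝ, MemDG N t r Z → MemDG N t r Y →
       Real.sqrt (dgNormSq (Matrix.fromBlocks 0 0 0 hL.posSemidef.sqrt)
           hKP.posSemidef.sqrt N t (fun n τ => Z n τ + Y n τ))
         ≤ Real.sqrt (dgNormSq (Matrix.fromBlocks 0 0 0 hL.posSemidef.sqrt)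
             hKP.posSemidef.sqrt N t Z)
           + Real.sqrt (dgNormSq (Matrix.fromBlocks 0 0 0 hL.posSemidef.sqrt)
               hKP.posSemidef.sqrt N t Y)) ∧
    (∀ Z : ℕ → ℝ → (Fin d ⊕ Fin d) → ℝ, MemDG N t r Z →
       Real.sqrt (dgNormSq (Matrix.fromBlocks 0 0 0 hL.posSemidef.sqrt)
           hKP.posSemidef.sqrt N t Z) = 0 →
       ∀ n ∈ Finset.Icc 1 N, ∀ s ∈ Set.Ioc (t (n-1)) (t n), Z n s = 0) :=
  stmt_4_general P L K hL hKP t hmono r
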